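/- With the same functions h, u, v as in the traveling-vortex solution (h = 1 - (a²/(4bg))exp(-2b(x̄²+ȳ²)), u = M cos θ + aȳ e^{-b(x̄²+ȳ²)}, v = M sin θ - ax̄ e^{-b(x̄²+ȳ²)}, x̄ = x - x₀ - Mt cos θ, ȳ = y - y₀ - Mt sin θ), the x-momentum equation ∂ₜ(hu) + ∂ₓ(hu² + gh²/2) + ∂_y(huv) = 0 holds identically for all (t,x,y). -/

import Mathlib

noncomputable def xbar (M θ x₀ : ℝ) (t x : ℝ) : ℝ := x - x₀ - M * t * Real.cos θ
noncomputable def ybar (M θ y₀ : ℝ) (t y : ℝ) : ℝ := y - y₀ - M * t * Real.sin θ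

noncomputable def hv (M a b g θ x₀ y₀ : ℝ) (t x y : ℝ) : ℝ :=
  1 - a ^ 2 / (4 * b * g) * Real.exp (-2 * b * ((xbar M θ x₀ t x) ^ 2 + (ybar M θ y₀ t y) ^ 2))

noncomputable def uv (M a b θ x₀ y₀ : ℝ) (t x y : ℝ) : ℝ :=
  M * Real.cos θ + a * ybar M θ y₀ t y * Real.exp (-b * ((xbar M θ x₀ t x) ^ 2 + (ybar M θ y₀ t y) ^ 2))

noncomputable def vv (M a b θ x₀ y₀ : ℝ) (t x y : ℝ) : ℝ :=
  M * Real.sin θ - a * xbar M θ x₀ t x * Real.exp (-b * ((xbar M θ x₀ t x) ^ 2 + (ybar M θ y₀ t y) ^ 2))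

/-!
In the frame moving with velocity `M (cos θ, sin θ)`, with `X = x̄`, `Y = ȳ` and
`G = exp (-b (X² + Y²))`, the flow is the steady swirl `a G (Y, -X)`. It is divergence free and
tangent to the circles on which the depth is constant, so the mass flux terms cancel, and its
centripetal acceleration `-a² G² (X, Y)` is balanced by the pressure gradient `g ∇h`. Since every
field depends on `(t, x, y)` only through `(X, Y)`, the chain rule turns the equation into a
polynomial identity in `X, Y, G`.
-/

open Real

noncomputable def gaussian (b X Y : ℝ) : ℝ := exp (-b * (X ^ 2 + Y ^ 2))

lemma exp_neg_two_mul_eq_gaussian_sq (b X Y : ℝ) :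
    exp (-2 * b * (X ^ 2 + Y ^ 2)) = gaussian b X Y ^ 2 := by
  rw [gaussian, ← exp_nat_mul]
  ring_nf

lemma hv_eq_gaussian (M a b g θ x₀ y₀ t x y : ℝ) :
    hv M a b g θ x₀ y₀ t x y
      = 1 - a ^ 2 / (4 * b * g) * gaussian b (xbar M θ x₀ t x) (ybar M θ y₀ t y) ^ 2 := by
  rw [hv, exp_neg_two_mul_eq_gaussian_sq]

lemma uv_eq_gaussian (M a b θ x₀ y₀ t x y : ℝ) :
    uv M a b θ x₀ y₀ t x y
      = M * cos θ + a * ybar M θ y₀ t y * gaussian b (xbar M θ x₀ t x) (ybar M θ y₀ t y) :=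
  rfl

lemma vv_eq_gaussian (M a b θ x₀ y₀ t x y : ℝ) :
    vv M a b θ x₀ y₀ t x y
      = M * sin θ + -a * xbar M θ x₀ t x * gaussian b (xbar M θ x₀ t x) (ybar M θ y₀ t y) := by
  rw [vv, gaussian]
  ring

section Profiles

variable {X Y Z : ℝ → ℝ} {dX dY dZ p : ℝ}

lemma hasDerivAt_gaussian (b : ℝ) (hX : HasDerivAt X dX p) (hY : HasDerivAt Y dY p) :
    HasDerivAt (fun q => gaussian b (X q) (Y q))
      (-2 * b * (X p * dX + Y p * dY) * gaussian b (X p) (Y p)) p := by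
  have hexp := (((hX.pow 2).add (hY.pow 2)).const_mul (-b)).exp
  refine hexp.congr_deriv ?_
  simp only [gaussian, Pi.add_apply, Pi.pow_apply, Nat.cast_ofNat, Nat.add_one_sub_one, pow_one]
  ring

/-- The factor `1 / (4 b)` in the depth cancels the `-4 b` of the chain rule: this is the
cyclostrophic balance `g ∇h = a² G² (X, Y)`. -/
lemma hasDerivAt_depth {a b g : ℝ} (hb : b ≠ 0) (hg : g ≠ 0)
    (hX : HasDerivAt X dX p) (hY : HasDerivAt Y dY p) :
    HasDerivAt (fun q => 1 - a ^ 2 / (4 * b * g) * gaussian b (X q) (Y q) ^ 2)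
      (a ^ 2 / g * (X p * dX + Y p * dY) * gaussian b (X p) (Y p) ^ 2) p := by
  refine ((((hasDerivAt_gaussian b hX hY).pow 2).const_mul (a ^ 2 / (4 * b * g))).const_sub 1
    ).congr_deriv ?_
  simp only [Nat.cast_ofNat, Nat.add_one_sub_one, pow_one]
  field_simp
  ring

lemma hasDerivAt_swirl (c a b : ℝ) (hX : HasDerivAt X dX p) (hY : HasDerivAt Y dY p)
    (hZ : HasDerivAt Z dZ p) :
    HasDerivAt (fun q => c + a * Z q * gaussian b (X q) (Y q))
      (a * (dZ - 2 * b * Z p * (X p * dX + Y p * dY)) * gaussian b (X p) (Y p)) p := by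
  refine (((hZ.const_mul a).mul (hasDerivAt_gaussian b hX hY)).const_add c).congr_deriv ?_
  ring

end Profiles

section Frame

variable (M θ x₀ y₀ t x y : ℝ)

lemma hasDerivAt_xbar_time : HasDerivAt (fun t => xbar M θ x₀ t x) (-(M * cos θ)) t := by
  refine ((((hasDerivAt_id t).const_mul M).mul_const (cos θ)).const_sub (x - x₀)).congr_deriv ?_
  ring

lemma hasDerivAt_ybar_time : HasDerivAt (fun t => ybar M θ y₀ t y) (-(M * sin θ)) t := by
  refine ((((hasDerivAt_id t).const_mul M).mul_const (sin θ)).const_sub (y - y₀)).congr_deriv ?_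
  ring

lemma hasDerivAt_xbar_space : HasDerivAt (fun x => xbar M θ x₀ t x) 1 x :=
  ((hasDerivAt_id x).sub_const x₀).sub_const _

lemma hasDerivAt_ybar_space : HasDerivAt (fun y => ybar M θ y₀ t y) 1 y :=
  ((hasDerivAt_id y).sub_const y₀).sub_const _

end Frame

/-- x-momentum equation for the traveling-vortex solution of the 2D shallow water system. -/
theorem vortex_x_momentum (M a b g x₀ y₀ θ : ℝ) (hg : 0 < g) (hb : b ≠ 0) :
    ∀ t x y : ℝ,
      deriv (fun t' => hv M a b g θ x₀ y₀ t' x y * uv M a b θ x₀ y₀ t' x y) t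
        + deriv (fun x' => hv M a b g θ x₀ y₀ t x' y * (uv M a b θ x₀ y₀ t x' y) ^ 2
            + g * (hv M a b g θ x₀ y₀ t x' y) ^ 2 / 2) x
        + deriv (fun y' => hv M a b g θ x₀ y₀ t x y' * uv M a b θ x₀ y₀ t x y'
            * vv M a b θ x₀ y₀ t x y') y = 0 := by
  intro t x y
  have hXt := hasDerivAt_xbar_time M θ x₀ t x
  have hYt := hasDerivAt_ybar_time M θ y₀ t y
  have hXx := hasDerivAt_xbar_space M θ x₀ t x
  have hYy := hasDerivAt_ybar_space M θ y₀ t y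
  have hYx := hasDerivAt_const x (ybar M θ y₀ t y)
  have hXy := hasDerivAt_const y (xbar M θ x₀ t x)
  have depth_t := hasDerivAt_depth (a := a) hb hg.ne' hXt hYt
  have depth_x := hasDerivAt_depth (a := a) hb hg.ne' hXx hYx
  have depth_y := hasDerivAt_depth (a := a) hb hg.ne' hXy hYy
  have flux_t := depth_t.fun_mul (hasDerivAt_swirl (M * cos θ) a b hXt hYt hYt)
  have flux_x :=
    (depth_x.fun_mul ((hasDerivAt_swirl (M * cos θ) a b hXx hYx hYx).fun_pow 2)).fun_add
      ((depth_x.fun_pow 2).const_mul g |>.div_const 2)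
  have flux_y := (depth_y.fun_mul (hasDerivAt_swirl (M * cos θ) a b hXy hYy hYy)).fun_mul
    (hasDerivAt_swirl (M * sin θ) (-a) b hXy hYy hXy)
  simp only [hv_eq_gaussian, uv_eq_gaussian, vv_eq_gaussian]
  rw [flux_t.deriv, flux_x.deriv, flux_y.deriv]
  simp only [Nat.cast_ofNat, Nat.add_one_sub_one, pow_one]
  field_simp
  ring
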